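/- Extension of isomorphisms on disjoint clones to a global automorphism (proof of Proposition 5.4): let C be a Cantor algebra free on one generator. Let X₁,…,X_k be pairwise disjoint clones of C whose union generates a proper subalgebra of C, let Y₁,…,Y_k be pairwise disjoint clones of C whose union generates a proper subalgebra of C, and for each j let φ_j : X_j → Y_j be a bijection satisfying φ_j(μ(x,y)) = μ(φ_j x, φ_j y) for all x, y ∈ X_j (an isomorphism of Cantor algebras between the subalgebras X_j and Y_j). Then there exists an automorphism v ∈ Aut(C) with v(x) = φ_j(x) for all j and all x ∈ X_j. -/

import Mathlib

open CategoryTheory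

/-- A Cantor algebra: a type with a bijection `μ : X × X ≃ X`. -/
structure CantorStr (X : Type) where
  mu : X × X ≃ X

/-- A homomorphism of Cantor algebras: a map commuting with the multiplications. -/
def IsCantorHom {C X : Type} (hC : CantorStr C) (hX : CantorStr X) (f : C → X) : Prop :=
  ∀ x y : C, f (hC.mu (x, y)) = hX.mu (f x, f y)

/-- `C` is the free Cantor algebra on the generators `b : Fin r → C`. -/
def IsFreeCantorOn {C : Type} (hC : CantorStr C) {r : ℕ} (b : Fin r → C) : Prop :=
  ∀ (X : Type) (hX : CantorStr X) (x : Fin r → X),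
    ∃! f : C → X, IsCantorHom hC hX f ∧ ∀ i, f (b i) = x i

/-- The automorphism group of a Cantor algebra, as a subgroup of the permutation group. -/
def cantorAut {C : Type} (hC : CantorStr C) : Subgroup (Equiv.Perm C) where
  carrier := {f : Equiv.Perm C | IsCantorHom hC hC f}
  one_mem' := fun _ _ => rfl
  mul_mem' := by
    intro a b ha hb x y
    simp only [Equiv.Perm.coe_mul, Function.comp_apply, hb x y, ha (b x) (b y)]
  inv_mem' := by
    intro a ha x y
    apply a.injective
    rw [Equiv.Perm.coe_inv, Equiv.apply_symm_apply, ha, Equiv.apply_symm_apply,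
      Equiv.apply_symm_apply]

/-- A subalgebra: a subset closed under `μ`, `λ` and `ρ`. -/
def IsCantorSubalgebra {C : Type} (hC : CantorStr C) (S : Set C) : Prop :=
  (∀ x ∈ S, ∀ y ∈ S, hC.mu (x, y) ∈ S) ∧
    ∀ x ∈ S, (hC.mu.symm x).1 ∈ S ∧ (hC.mu.symm x).2 ∈ S

/-- The subalgebra generated by a subset: the smallest subalgebra containing it. -/
def genCantorSubalgebra {C : Type} (hC : CantorStr C) (A : Set C) : Set C :=
  ⋂₀ {S : Set C | IsCantorSubalgebra hC S ∧ A ⊆ S}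

/-- A clone: a nonempty, proper, finitely generated subalgebra. -/
def IsClone {C : Type} (hC : CantorStr C) (X : Set C) : Prop :=
  IsCantorSubalgebra hC X ∧ X.Nonempty ∧ X ≠ Set.univ ∧
    ∃ F : Set C, F.Finite ∧ X = genCantorSubalgebra hC F

/-!
The free Cantor algebra on one generator is realised concretely by *table maps*: self-maps of
Cantor space `Stream' Bool` which, on every cylinder of some fixed depth, replace the prefix by
another finite word. Here `μ (f, g)` sends `0ξ ↦ f ξ` and `1ξ ↦ g ξ`, and the identity map is the
generator. Post-composition with a homeomorphism `σ` of Cantor space such that `σ` and `σ⁻¹` are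
table maps is an automorphism.

The ranges of the elements of the clones `X j` cover a set `D_X` of sequences. Because the clones
are finitely generated, `D_X` is a finite union of cylinders, and each of these cylinders is itself
an element of some `X j`. Because they generate a proper subalgebra, `D_X` is not all of Cantor
space. The isomorphisms give a map `D_X → D_Y`, `x ξ ↦ (φ j x) ξ`, which is well defined because
two elements with overlapping ranges have a common restriction, which lies in a single clone by
disjointness. On the complements, which are nonempty finite unions of cylinders, any table
bijection will do. Gluing the two pieces gives `σ`.
-/

open Set Function

section Algebra

variable {X Y : Type} {hX : CantorStr X} {hY : CantorStr Y}

def CantorStr.proj (hX : CantorStr X) (b : Bool) (x : X) : X :=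
  if b then (hX.mu.symm x).2 else (hX.mu.symm x).1

def CantorStr.projWord (hX : CantorStr X) : List Bool → X → X
  | [], x => x
  | b :: w, x => hX.projWord w (hX.proj b x)

def IsCantorHomOn (hX : CantorStr X) (hY : CantorStr Y) (S : Set X) (f : X → Y) : Prop :=
  ∀ x ∈ S, ∀ y ∈ S, f (hX.mu (x, y)) = hY.mu (f x, f y)

def IsFGCantorSubalgebra (hX : CantorStr X) (S : Set X) : Prop :=
  ∃ F : Set X, F.Finite ∧ S = genCantorSubalgebra hX F

lemma CantorStr.mu_proj (x : X) : hX.mu (hX.proj false x, hX.proj true x) = x := by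
  simp [CantorStr.proj]

lemma CantorStr.proj_mu (x y : X) (b : Bool) : hX.proj b (hX.mu (x, y)) = if b then y else x := by
  cases b <;> simp [CantorStr.proj]

lemma CantorStr.projWord_concat (w : List Bool) (b : Bool) (x : X) :
    hX.projWord (w ++ [b]) x = hX.proj b (hX.projWord w x) := by
  induction w generalizing x with
  | nil => rfl
  | cons a w ih => exact ih _

lemma IsCantorSubalgebra.proj_mem {S : Set X} (hS : IsCantorSubalgebra hX S) {x : X}
    (hx : x ∈ S) (b : Bool) : hX.proj b x ∈ S := by
  cases b
  exacts [(hS.2 x hx).1, (hS.2 x hx).2]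

lemma CantorStr.projWord_mem {S : Set X} (hS : ∀ x ∈ S, ∀ b, hX.proj b x ∈ S) {x : X} (hx : x ∈ S)
    (w : List Bool) : hX.projWord w x ∈ S := by
  induction w generalizing x with
  | nil => exact hx
  | cons b w ih => exact ih (hS x hx b)

lemma IsCantorHom.isCantorHomOn {f : X → Y} (hf : IsCantorHom hX hY f) (S : Set X) :
    IsCantorHomOn hX hY S f :=
  fun x _ y _ => hf x y

lemma isCantorSubalgebra_univ : IsCantorSubalgebra hX univ :=
  ⟨fun _ _ _ _ => trivial, fun _ _ => ⟨trivial, trivial⟩⟩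

lemma IsCantorHomOn.map_proj {S : Set X} {f : X → Y} (hf : IsCantorHomOn hX hY S f)
    (hS : IsCantorSubalgebra hX S) {x : X} (hx : x ∈ S) (b : Bool) :
    f (hX.proj b x) = hY.proj b (f x) := by
  conv_rhs => rw [← hX.mu_proj x, hf _ (hS.proj_mem hx false) _ (hS.proj_mem hx true)]
  cases b <;> simp [CantorStr.proj_mu]

lemma IsCantorHomOn.map_projWord {S : Set X} {f : X → Y} (hf : IsCantorHomOn hX hY S f)
    (hS : IsCantorSubalgebra hX S) {x : X} (hx : x ∈ S) (w : List Bool) :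
    f (hX.projWord w x) = hY.projWord w (f x) := by
  induction w generalizing x with
  | nil => rfl
  | cons b w ih => exact (ih (hS.proj_mem hx b)).trans (by rw [hf.map_proj hS hx]; rfl)

lemma IsCantorHom.map_proj {f : X → Y} (hf : IsCantorHom hX hY f) (x : X) (b : Bool) :
    f (hX.proj b x) = hY.proj b (f x) :=
  (hf.isCantorHomOn univ).map_proj isCantorSubalgebra_univ trivial b

lemma IsCantorHom.comp {Z : Type} {hZ : CantorStr Z} {f : X → Y} {g : Y → Z}
    (hg : IsCantorHom hY hZ g) (hf : IsCantorHom hX hY f) : IsCantorHom hX hZ (g ∘ f) := by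
  intro x y
  simp only [comp_apply, hf x y, hg (f x) (f y)]

lemma IsCantorHom.symm {e : X ≃ Y} (he : IsCantorHom hX hY e) : IsCantorHom hY hX e.symm := by
  intro x y
  apply e.injective
  rw [he, Equiv.apply_symm_apply, Equiv.apply_symm_apply, Equiv.apply_symm_apply]

lemma IsCantorSubalgebra.image {f : X → Y} (hf : IsCantorHom hX hY f) {S : Set X}
    (hS : IsCantorSubalgebra hX S) : IsCantorSubalgebra hY (f '' S) := by
  refine ⟨?_, ?_⟩
  · rintro _ ⟨x, hx, rfl⟩ _ ⟨y, hy, rfl⟩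
    exact ⟨_, hS.1 x hx y hy, hf x y⟩
  · rintro _ ⟨x, hx, rfl⟩
    exact ⟨⟨_, hS.proj_mem hx false, hf.map_proj x false⟩,
      ⟨_, hS.proj_mem hx true, hf.map_proj x true⟩⟩

lemma IsCantorSubalgebra.preimage {f : X → Y} (hf : IsCantorHom hX hY f) {S : Set Y}
    (hS : IsCantorSubalgebra hY S) : IsCantorSubalgebra hX (f ⁻¹' S) := by
  refine ⟨fun x hx y hy => ?_, fun x hx => ⟨?_, ?_⟩⟩
  · simpa only [mem_preimage, hf x y] using hS.1 _ hx _ hy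
  · have := hS.proj_mem hx false
    rwa [← hf.map_proj] at this
  · have := hS.proj_mem hx true
    rwa [← hf.map_proj] at this

lemma isCantorSubalgebra_genCantorSubalgebra (A : Set X) :
    IsCantorSubalgebra hX (genCantorSubalgebra hX A) := by
  refine ⟨fun x hx y hy S hS => hS.1.1 x (hx S hS) y (hy S hS), fun x hx => ⟨?_, ?_⟩⟩
  · exact fun S hS => (hS.1.2 x (hx S hS)).1
  · exact fun S hS => (hS.1.2 x (hx S hS)).2

lemma subset_genCantorSubalgebra (A : Set X) : A ⊆ genCantorSubalgebra hX A :=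
  fun _ hx _ hS => hS.2 hx

lemma genCantorSubalgebra_subset {A S : Set X} (hS : IsCantorSubalgebra hX S) (h : A ⊆ S) :
    genCantorSubalgebra hX A ⊆ S :=
  fun _ hx => hx S ⟨hS, h⟩

lemma image_genCantorSubalgebra {f : X → Y} (hf : IsCantorHom hX hY f) (A : Set X) :
    f '' genCantorSubalgebra hX A = genCantorSubalgebra hY (f '' A) := by
  refine (image_subset_iff.2 ?_).antisymm ?_
  · exact genCantorSubalgebra_subset ((isCantorSubalgebra_genCantorSubalgebra _).preimage hf)
      fun x hx => subset_genCantorSubalgebra _ ⟨x, hx, rfl⟩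
  · exact genCantorSubalgebra_subset ((isCantorSubalgebra_genCantorSubalgebra A).image hf)
      (image_mono (subset_genCantorSubalgebra A))

lemma IsFGCantorSubalgebra.isCantorSubalgebra {S : Set X} (hS : IsFGCantorSubalgebra hX S) :
    IsCantorSubalgebra hX S := by
  obtain ⟨F, -, rfl⟩ := hS
  exact isCantorSubalgebra_genCantorSubalgebra F

lemma IsFGCantorSubalgebra.image {f : X → Y} (hf : IsCantorHom hX hY f) {S : Set X}
    (hS : IsFGCantorSubalgebra hX S) : IsFGCantorSubalgebra hY (f '' S) := by
  obtain ⟨F, hF, rfl⟩ := hS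
  exact ⟨f '' F, hF.image f, image_genCantorSubalgebra hf F⟩

lemma IsCantorHomOn.invFunOn [Nonempty X] {S : Set X} {T : Set Y} {f : X → Y}
    (hf : IsCantorHomOn hX hY S f) (hS : IsCantorSubalgebra hX S) (hbij : BijOn f S T) :
    IsCantorHomOn hY hX T (Function.invFunOn f S) := by
  intro y hy y' hy'
  set g := Function.invFunOn f S
  have hx : g y ∈ S := invFunOn_mem (hbij.surjOn hy)
  have hx' : g y' ∈ S := invFunOn_mem (hbij.surjOn hy')
  calc g (hY.mu (y, y')) = g (f (hX.mu (g y, g y'))) := by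
        rw [hf _ hx _ hx', invFunOn_eq (hbij.surjOn hy), invFunOn_eq (hbij.surjOn hy')]
    _ = hX.mu (g y, g y') := hbij.invOn_invFunOn.1 (hS.1 _ hx _ hx')

def PartialIsosExtend (hX : CantorStr X) : Prop :=
  ∀ (ι : Type) [Finite ι] (A B : ι → Set X) (φ : ι → X → X),
    (∀ j, IsFGCantorSubalgebra hX (A j)) → (∀ j, IsFGCantorSubalgebra hX (B j)) →
    Pairwise (Disjoint on A) → Pairwise (Disjoint on B) →
    genCantorSubalgebra hX (⋃ j, A j) ≠ univ → genCantorSubalgebra hX (⋃ j, B j) ≠ univ →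
    (∀ j, BijOn (φ j) (A j) (B j)) → (∀ j, IsCantorHomOn hX hX (A j) (φ j)) →
    ∃ v : Equiv.Perm X, IsCantorHom hX hX v ∧ ∀ j, ∀ x ∈ A j, v x = φ j x

lemma PartialIsosExtend.of_equiv (e : X ≃ Y) (he : IsCantorHom hX hY e)
    (h : PartialIsosExtend hY) : PartialIsosExtend hX := by
  intro ι _ A B φ hA hB hAd hBd hAp hBp hbij hφ
  have hproper : ∀ S : ι → Set X, genCantorSubalgebra hX (⋃ j, S j) ≠ univ →
      genCantorSubalgebra hY (⋃ j, e '' S j) ≠ univ := by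
    intro S hS hS'
    rw [← image_iUnion, ← image_genCantorSubalgebra he,
      ← image_univ_of_surjective e.surjective] at hS'
    exact hS (e.injective.image_injective hS')
  have hsymm : ∀ S : Set X, BijOn e.symm (e '' S) S :=
    fun S => by simpa only [e.symm_image_image] using e.symm.bijOn_image (s := e '' S)
  obtain ⟨v, hv, hvφ⟩ := h ι (fun j => e '' A j) (fun j => e '' B j) (fun j => e ∘ φ j ∘ e.symm)
    (fun j => (hA j).image he) (fun j => (hB j).image he)
    (fun i j hij => (disjoint_image_iff e.injective).2 (hAd hij))
    (fun i j hij => (disjoint_image_iff e.injective).2 (hBd hij)) (hproper A hAp) (hproper B hBp)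
    (fun j => e.bijOn_image.comp ((hbij j).comp (hsymm (A j)))) fun j => by
      rintro _ ⟨x, hx, rfl⟩ _ ⟨y, hy, rfl⟩
      simp only [comp_apply, ← he x y, Equiv.symm_apply_apply, hφ j x hx y hy]
      exact he _ _
  refine ⟨(e.trans v).trans e.symm, he.symm.comp (hv.comp he), fun j x hx => ?_⟩
  simp [hvφ j (e x) (mem_image_of_mem e hx)]

end Algebra

namespace CantorTable

def cyl (w : List Bool) (ξ : Stream' Bool) : Stream' Bool := w ++ₛ ξ

@[simp] lemma cyl_apply (w : List Bool) (ξ : Stream' Bool) : cyl w ξ = w ++ₛ ξ := rfl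

lemma cyl_nil : cyl [] = id := rfl

lemma cyl_append (u v : List Bool) : cyl (u ++ v) = cyl u ∘ cyl v :=
  funext (Stream'.append_append_stream u v)

lemma cyl_cons (b : Bool) (u : List Bool) : cyl (b :: u) = cyl [b] ∘ cyl u :=
  cyl_append [b] u

lemma take_append_stream_of_length {u : List Bool} {N : ℕ} (hu : u.length = N)
    (ξ : Stream' Bool) : Stream'.take N (u ++ₛ ξ) = u := by
  rw [Stream'.take_append_of_le_length _ _ _ hu.ge, ← hu, List.take_length]

lemma exists_append_of_append_stream_eq {u u' : List Bool} {ξ ξ' : Stream' Bool}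
    (h : u ++ₛ ξ = u' ++ₛ ξ') (hl : u.length ≤ u'.length) :
    ∃ t, u' = u ++ t ∧ ξ = t ++ₛ ξ' := by
  obtain ⟨k, hk⟩ := Nat.exists_eq_add_of_le hl
  have hu' : u' = u ++ Stream'.take k ξ := by
    rw [Stream'.append_take, ← hk, h, take_append_stream_of_length rfl]
  refine ⟨Stream'.take k ξ, hu', Stream'.append_right_injective u _ _ ?_⟩
  rw [h, hu', Stream'.append_append_stream]

lemma length_le_of_cyl_eq {u u' : List Bool} (h : cyl u = cyl u') : u'.length ≤ u.length := by
  by_contra! hlt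
  have key : ∀ b, b = u'[u.length] := fun b => by
    have := congrArg (fun ξ => ξ.get u.length) (congrFun h (Stream'.const b))
    simpa [Stream'.get_append_left _ _ _ hlt, Stream'.get_const] using this
  exact Bool.false_ne_true ((key false).trans (key true).symm)

lemma cyl_injective : Injective cyl := fun u u' h =>
  Stream'.append_left_injective u u' (Stream'.const false) (Stream'.const false) (congrFun h _)
    (le_antisymm (length_le_of_cyl_eq h.symm) (length_le_of_cyl_eq h))

def join (f g : Stream' Bool → Stream' Bool) (ζ : Stream' Bool) : Stream' Bool :=
  if ζ.head then g ζ.tail else f ζ.tail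

variable {f g : Stream' Bool → Stream' Bool}

@[simp] lemma join_false_append (ξ : Stream' Bool) : join f g ([false] ++ₛ ξ) = f ξ := rfl

@[simp] lemma join_true_append (ξ : Stream' Bool) : join f g ([true] ++ₛ ξ) = g ξ := rfl

@[simp] lemma join_comp_cyl_false : join f g ∘ cyl [false] = f := rfl

@[simp] lemma join_comp_cyl_true : join f g ∘ cyl [true] = g := rfl

lemma join_comp_cyl_self (f : Stream' Bool → Stream' Bool) :
    join (f ∘ cyl [false]) (f ∘ cyl [true]) = f := by
  funext ζ
  obtain ⟨b, ξ, rfl⟩ : ∃ b ξ, ζ = [b] ++ₛ ξ :=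
    ⟨ζ.head, ζ.tail, (Stream'.append_stream_head_tail ζ).symm⟩
  cases b <;> rfl

lemma comp_join (d : Stream' Bool → Stream' Bool) : d ∘ join f g = join (d ∘ f) (d ∘ g) := by
  funext ζ
  simp only [join, comp_apply]
  split_ifs <;> rfl

lemma range_join_subset : range (join f g) ⊆ range f ∪ range g := by
  rintro _ ⟨ζ, rfl⟩
  unfold join
  split_ifs
  exacts [Or.inr ⟨_, rfl⟩, Or.inl ⟨_, rfl⟩]

lemma join_cyl (w : List Bool) : join (cyl (w ++ [false])) (cyl (w ++ [true])) = cyl w := by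
  simpa only [cyl_append] using join_comp_cyl_self (cyl w)

def TableAt (n : ℕ) (f : Stream' Bool → Stream' Bool) : Prop :=
  ∀ u : List Bool, u.length = n → ∃ w, f ∘ cyl u = cyl w

def IsTable (f : Stream' Bool → Stream' Bool) : Prop := ∃ n, TableAt n f

variable {n : ℕ}

lemma TableAt.exists_of_le (h : TableAt n f) {u : List Bool} (hu : n ≤ u.length) :
    ∃ w, f ∘ cyl u = cyl w := by
  obtain ⟨w, hw⟩ := h (u.take n) (by simp [hu])
  refine ⟨w ++ u.drop n, ?_⟩
  rw [← List.take_append_drop n u, cyl_append, ← comp_assoc, hw, ← cyl_append,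
    List.take_append_drop]

lemma TableAt.mono (h : TableAt n f) {m : ℕ} (hnm : n ≤ m) : TableAt m f :=
  fun _ hu => h.exists_of_le (hu ▸ hnm)

lemma TableAt.comp_cyl (h : TableAt n f) (v : List Bool) : TableAt n (f ∘ cyl v) := by
  intro u hu
  simpa only [comp_assoc, cyl_append] using h.exists_of_le (u := v ++ u) (by simp [hu])

lemma tableAt_zero_iff : TableAt 0 f ↔ ∃ w, f = cyl w := by
  simp [TableAt, List.length_eq_zero_iff, cyl_nil]

lemma tableAt_succ_iff : TableAt (n + 1) f ↔ ∀ b, TableAt n (f ∘ cyl [b]) := by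
  refine ⟨fun h b u hu => ?_, fun h u hu => ?_⟩
  · rw [comp_assoc, ← cyl_cons]
    exact h (b :: u) (by simp [hu])
  · obtain ⟨b, u, rfl⟩ := List.exists_cons_of_length_eq_add_one hu
    rw [cyl_cons, ← comp_assoc]
    exact h b u (by simpa using hu)

lemma TableAt.join (hf : TableAt n f) (hg : TableAt n g) :
    TableAt (n + 1) (CantorTable.join f g) :=
  tableAt_succ_iff.2 fun b => by cases b <;> assumption

lemma TableAt.induction {P : (Stream' Bool → Stream' Bool) → Prop} (hcyl : ∀ w, P (cyl w))
    (hjoin : ∀ f g, P f → P g → P (CantorTable.join f g)) : TableAt n f → P f := by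
  induction n generalizing f with
  | zero =>
    rintro hf
    obtain ⟨w, rfl⟩ := tableAt_zero_iff.1 hf
    exact hcyl w
  | succ n ih =>
    intro hf
    rw [← join_comp_cyl_self f]
    exact hjoin _ _ (ih (tableAt_succ_iff.1 hf false)) (ih (tableAt_succ_iff.1 hf true))

lemma TableAt.exists_length_le (h : TableAt n f) :
    ∃ K, ∀ u : List Bool, u.length = n → ∃ w, w.length ≤ K ∧ f ∘ cyl u = cyl w := by
  induction n generalizing f with
  | zero =>
    obtain ⟨w, rfl⟩ := tableAt_zero_iff.1 h
    refine ⟨w.length, fun u hu => ⟨w, le_rfl, ?_⟩⟩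
    rw [List.length_eq_zero_iff.1 hu, cyl_nil, comp_id]
  | succ n ih =>
    choose K hK using fun b => ih (tableAt_succ_iff.1 h b)
    refine ⟨K false + K true, fun u hu => ?_⟩
    obtain ⟨b, u, rfl⟩ := List.exists_cons_of_length_eq_add_one hu
    obtain ⟨w, hwK, hw⟩ := hK b u (by simpa using hu)
    refine ⟨w, by cases b <;> omega, ?_⟩
    rwa [cyl_cons, ← comp_assoc]

lemma isTable_cyl (w : List Bool) : IsTable (cyl w) :=
  ⟨0, tableAt_zero_iff.2 ⟨w, rfl⟩⟩

lemma IsTable.join (hf : IsTable f) (hg : IsTable g) : IsTable (CantorTable.join f g) := by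
  obtain ⟨n, hn⟩ := hf
  obtain ⟨m, hm⟩ := hg
  exact ⟨max n m + 1, (hn.mono (le_max_left n m)).join (hm.mono (le_max_right n m))⟩

lemma IsTable.comp_cyl (hf : IsTable f) (v : List Bool) : IsTable (f ∘ cyl v) :=
  hf.imp fun _ h => h.comp_cyl v

lemma IsTable.of_join_left (h : IsTable (CantorTable.join f g)) : IsTable f := by
  simpa using h.comp_cyl [false]

lemma IsTable.of_join_right (h : IsTable (CantorTable.join f g)) : IsTable g := by
  simpa using h.comp_cyl [true]

lemma IsTable.comp {d : Stream' Bool → Stream' Bool} (hd : IsTable d) (hf : IsTable f) :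
    IsTable (d ∘ f) := by
  obtain ⟨n, hn⟩ := hf
  refine hn.induction (P := fun f => IsTable (d ∘ f)) hd.comp_cyl fun f g hf hg => ?_
  rw [comp_join]
  exact hf.join hg

lemma isTable_of_forall_comp_cyl (N : ℕ)
    (h : ∀ u : List Bool, u.length = N → IsTable (f ∘ cyl u)) : IsTable f := by
  induction N generalizing f with
  | zero => simpa [cyl_nil] using h [] rfl
  | succ N ih =>
    rw [← join_comp_cyl_self f]
    refine .join (ih fun u hu => ?_) (ih fun u hu => ?_) <;>
      rw [comp_assoc, ← cyl_cons] <;> exact h _ (by simp [hu])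

lemma IsTable.exists_bound (hf : IsTable f) : ∃ K, ∀ ξ : Stream' Bool,
    ∃ v w ψ, w.length ≤ K ∧ ξ = v ++ₛ ψ ∧ f ∘ cyl v = cyl w := by
  obtain ⟨n, hn⟩ := hf
  obtain ⟨K, hK⟩ := hn.exists_length_le
  refine ⟨K, fun ξ => ?_⟩
  obtain ⟨w, hwK, hw⟩ := hK (Stream'.take n ξ) (Stream'.length_take n ξ)
  exact ⟨Stream'.take n ξ, w, Stream'.drop n ξ, hwK, (Stream'.append_take_drop n ξ).symm, hw⟩

lemma exists_comp_cyl_eq_of_le {v v' w w' : List Bool} {ψ ψ' : Stream' Bool}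
    (hv : f ∘ cyl v = cyl w) (hv' : g ∘ cyl v' = cyl w') (h : w ++ₛ ψ = w' ++ₛ ψ')
    (hl : w.length ≤ w'.length) : ∃ t, ψ = t ++ₛ ψ' ∧ f ∘ cyl (v ++ t) = g ∘ cyl v' := by
  obtain ⟨t, rfl, rfl⟩ := exists_append_of_append_stream_eq h hl
  exact ⟨t, rfl, by rw [cyl_append, ← comp_assoc, hv, hv', cyl_append]⟩

lemma IsTable.exists_comp_cyl_eq (hf : IsTable f) (hg : IsTable g) {ξ η : Stream' Bool}
    (h : f ξ = g η) : ∃ v v' ψ, ξ = v ++ₛ ψ ∧ η = v' ++ₛ ψ ∧ f ∘ cyl v = g ∘ cyl v' := by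
  obtain ⟨_, hf⟩ := hf.exists_bound
  obtain ⟨_, hg⟩ := hg.exists_bound
  obtain ⟨v, w, ψ, -, rfl, hv⟩ := hf ξ
  obtain ⟨v', w', ψ', -, rfl, hv'⟩ := hg η
  have h' : w ++ₛ ψ = w' ++ₛ ψ' := by
    simpa only [← cyl_apply, ← comp_apply (f := f), ← comp_apply (f := g), hv, hv'] using h
  rcases le_total w.length w'.length with hl | hl
  · obtain ⟨t, rfl, ht⟩ := exists_comp_cyl_eq_of_le hv hv' h' hl
    exact ⟨v ++ t, v', ψ', by simp, rfl, ht⟩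
  · obtain ⟨t, rfl, ht⟩ := exists_comp_cyl_eq_of_le hv' hv h'.symm hl
    exact ⟨v, v' ++ t, ψ, rfl, by simp, ht.symm⟩

abbrev Table : Type := {f : Stream' Bool → Stream' Bool // IsTable f}

def tableStr : CantorStr Table where
  mu :=
    { toFun := fun p => ⟨join p.1.1 p.2.1, p.1.2.join p.2.2⟩
      invFun := fun x => (⟨x.1 ∘ cyl [false], x.2.comp_cyl _⟩, ⟨x.1 ∘ cyl [true], x.2.comp_cyl _⟩)
      left_inv := fun _ => rfl
      right_inv := fun x => Subtype.ext (join_comp_cyl_self x.1) }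

def cylinder (w : List Bool) : Table := ⟨cyl w, isTable_cyl w⟩

instance : Inhabited Table := ⟨cylinder []⟩

lemma tableStr_projWord_val (w : List Bool) (x : Table) :
    (tableStr.projWord w x).1 = x.1 ∘ cyl w := by
  induction w generalizing x with
  | nil => rfl
  | cons b w ih =>
    rw [cyl_cons, ← comp_assoc]
    exact (ih (tableStr.proj b x)).trans (by cases b <;> rfl)

lemma tableStr_projWord_cylinder_nil (w : List Bool) : tableStr.projWord w (cylinder []) = cylinder w :=
  Subtype.ext (tableStr_projWord_val w _)

lemma Table.induction {P : Table → Prop} (hcyl : ∀ w, P (cylinder w))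
    (hmu : ∀ x y, P x → P y → P (tableStr.mu (x, y))) (x : Table) : P x := by
  obtain ⟨f, n, hn⟩ := x
  refine hn.induction (P := fun f => ∀ hf : IsTable f, P ⟨f, hf⟩) (fun w _ => hcyl w) ?_ _
  exact fun f g hf hg hfg => hmu ⟨f, hfg.of_join_left⟩ ⟨g, hfg.of_join_right⟩ (hf _) (hg _)

lemma eq_univ_of_cylinder_nil_mem {S : Set Table} (hS : IsCantorSubalgebra tableStr S)
    (h : cylinder [] ∈ S) : S = univ := by
  refine eq_univ_of_forall (Table.induction (fun w => ?_) fun x y hx hy => hS.1 x hx y hy)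
  rw [← tableStr_projWord_cylinder_nil]
  exact CantorStr.projWord_mem (fun x hx => hS.proj_mem hx) h w

lemma cylinder_nil_mem_of_forall_length_eq {S : Set Table} (hS : IsCantorSubalgebra tableStr S)
    (N : ℕ) (h : ∀ u : List Bool, u.length = N → cylinder u ∈ S) : cylinder [] ∈ S := by
  induction N with
  | zero => exact h [] rfl
  | succ N ih =>
    refine ih fun u hu => ?_
    have hjoin : tableStr.mu (cylinder (u ++ [false]), cylinder (u ++ [true])) = cylinder u :=
      Subtype.ext (join_cyl u)
    rw [← hjoin]
    exact hS.1 _ (h _ (by simp [hu])) _ (h _ (by simp [hu]))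

section Eval

variable {C : Type} (hC : CantorStr C) (c : C)

noncomputable def evalAt : ℕ → (Stream' Bool → Stream' Bool) → C
  -- only meaningful for `f = cyl w`, where the `epsilon` is `w` by `cyl_injective`
  | 0, f => hC.projWord (Classical.epsilon fun w => f = cyl w) c
  | n + 1, f => hC.mu (evalAt n (f ∘ cyl [false]), evalAt n (f ∘ cyl [true]))

lemma evalAt_cyl (m : ℕ) (w : List Bool) : evalAt hC c m (cyl w) = hC.projWord w c := by
  induction m generalizing w with
  | zero =>
    have hw : cyl w = cyl (Classical.epsilon fun w' => cyl w = cyl w') :=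
      Classical.epsilon_spec (p := fun w' => cyl w = cyl w') ⟨w, rfl⟩
    rw [evalAt, ← cyl_injective hw]
  | succ m ih =>
    rw [evalAt, ← cyl_append, ← cyl_append, ih, ih, hC.projWord_concat, hC.projWord_concat,
      hC.mu_proj]

lemma evalAt_eq_of_le {n m : ℕ} {f : Stream' Bool → Stream' Bool} (hf : TableAt n f)
    (hnm : n ≤ m) : evalAt hC c m f = evalAt hC c n f := by
  induction n generalizing f m with
  | zero =>
    obtain ⟨w, rfl⟩ := tableAt_zero_iff.1 hf
    rw [evalAt_cyl, evalAt_cyl]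
  | succ n ih =>
    obtain ⟨m, rfl⟩ : ∃ m', m = m' + 1 := ⟨m - 1, by omega⟩
    rw [tableAt_succ_iff] at hf
    simp only [evalAt]
    rw [ih (hf false) (by omega), ih (hf true) (by omega)]

noncomputable def evalTable (x : Table) : C := evalAt hC c x.2.choose x.1

lemma evalTable_eq {n : ℕ} (x : Table) (hn : TableAt n x.1) :
    evalTable hC c x = evalAt hC c n x.1 := by
  rw [evalTable, ← evalAt_eq_of_le hC c x.2.choose_spec (le_max_left _ n),
    evalAt_eq_of_le hC c hn (le_max_right _ n)]

lemma isCantorHom_evalTable : IsCantorHom tableStr hC (evalTable hC c) := by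
  rintro ⟨f, n, hf⟩ ⟨g, m, hg⟩
  have hf' := hf.mono (le_max_left n m)
  have hg' := hg.mono (le_max_right n m)
  rw [evalTable_eq hC c _ (hf'.join hg'), evalTable_eq hC c _ hf', evalTable_eq hC c _ hg']
  rfl

lemma evalTable_cylinder_nil : evalTable hC c (cylinder []) = c := by
  rw [evalTable_eq hC c _ (tableAt_zero_iff.2 ⟨[], rfl⟩)]
  exact evalAt_cyl hC c 0 []

end Eval

lemma exists_equiv_table {C : Type} {hC : CantorStr C} {c : C} (hfree : IsFreeCantorOn hC ![c]) :
    ∃ e : C ≃ Table, IsCantorHom hC tableStr e := by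
  obtain ⟨h, ⟨hh, hhc⟩, -⟩ := hfree Table tableStr ![cylinder []]
  have hc : h c = cylinder [] := hhc 0
  obtain ⟨_, _, huniq⟩ := hfree C hC ![c]
  have hleft : evalTable hC c ∘ h = id := by
    refine (huniq _ ⟨(isCantorHom_evalTable hC c).comp hh, fun i => ?_⟩).trans
      (huniq id ⟨fun _ _ => rfl, fun _ => rfl⟩).symm
    rw [Subsingleton.elim i 0]
    simp [hc, evalTable_cylinder_nil]
  have hrange : range h = univ := by
    rw [← image_univ]
    exact eq_univ_of_cylinder_nil_mem (isCantorSubalgebra_univ.image hh) ⟨c, trivial, hc⟩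
  exact ⟨Equiv.ofBijective h ⟨(leftInverse_iff_comp.2 hleft).injective, range_eq_univ.1 hrange⟩, hh⟩

def support (S : Set Table) : Set (Stream' Bool) := ⋃ x ∈ S, range x.1

lemma mem_support {S : Set Table} {ζ : Stream' Bool} :
    ζ ∈ support S ↔ ∃ x ∈ S, ∃ ξ, x.1 ξ = ζ := by
  simp [support]

lemma support_mono {S T : Set Table} (h : S ⊆ T) : support S ⊆ support T :=
  biUnion_subset_biUnion_left h

lemma support_genCantorSubalgebra_subset (F : Set Table) :
    support (genCantorSubalgebra tableStr F) ⊆ support F := by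
  have hR : IsCantorSubalgebra tableStr {x : Table | range x.1 ⊆ support F} := by
    refine ⟨fun x hx y hy => range_join_subset.trans (union_subset hx hy), fun x hx => ?_⟩
    exact ⟨(range_comp_subset_range (cyl [false]) x.1).trans hx,
      (range_comp_subset_range (cyl [true]) x.1).trans hx⟩
  have hFR : F ⊆ {x : Table | range x.1 ⊆ support F} :=
    fun x hx => subset_biUnion_of_mem (u := fun x : Table => range x.1) hx
  intro ζ hζ
  obtain ⟨x, hx, ξ, rfl⟩ := mem_support.1 hζ
  exact genCantorSubalgebra_subset hR hFR hx ⟨ξ, rfl⟩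

lemma exists_cylinder_mem_of_append_mem_support {S F : Set Table}
    (hS : ∀ x ∈ S, ∀ b, tableStr.proj b x ∈ S) (hF : F.Finite) (hFS : F ⊆ S)
    (hSF : support S ⊆ support F) :
    ∃ N₀, ∀ u : List Bool, N₀ ≤ u.length → ∀ ξ, u ++ₛ ξ ∈ support S → cylinder u ∈ S := by
  choose K hK using fun f : Table => f.2.exists_bound
  obtain ⟨N₀, hN₀⟩ := (hF.image K).bddAbove
  refine ⟨N₀, fun u hu ξ hmem => ?_⟩
  obtain ⟨f, hf, ξ₀, hξ₀⟩ := mem_support.1 (hSF hmem)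
  obtain ⟨v, w, ψ, hwK, rfl, hv⟩ := hK f ξ₀
  have hwψ : w ++ₛ ψ = u ++ₛ ξ := by rw [← hξ₀]; exact (congrFun hv ψ).symm
  obtain ⟨t, rfl, -⟩ :=
    exists_append_of_append_stream_eq hwψ (hwK.trans ((hN₀ ⟨f, hf, rfl⟩).trans hu))
  have hproj : cylinder (w ++ t) = tableStr.projWord (v ++ t) f := by
    refine Subtype.ext ?_
    rw [tableStr_projWord_val, cyl_append, ← comp_assoc, hv, ← cyl_append]
    rfl
  rw [hproj]
  exact CantorStr.projWord_mem hS (hFS hf) _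

lemma exists_depth_mem_support_iff {ι : Type} [Finite ι] {A : ι → Set Table}
    (hA : ∀ j, IsFGCantorSubalgebra tableStr (A j)) : ∃ N₀, ∀ N, N₀ ≤ N → ∀ ζ,
      ζ ∈ support (⋃ j, A j) ↔ cylinder (Stream'.take N ζ) ∈ ⋃ j, A j := by
  choose F hF hAF using hA
  have hproj : ∀ x ∈ ⋃ j, A j, ∀ b, tableStr.proj b x ∈ ⋃ j, A j := by
    simp only [mem_iUnion]
    rintro x ⟨j, hx⟩ b
    exact ⟨j, ((hAF j) ▸ isCantorSubalgebra_genCantorSubalgebra (F j)).proj_mem hx b⟩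
  have hFS : ⋃ j, F j ⊆ ⋃ j, A j :=
    iUnion_mono fun j => (hAF j).symm ▸ subset_genCantorSubalgebra (F j)
  have hSF : support (⋃ j, A j) ⊆ support (⋃ j, F j) := by
    intro ζ hζ
    obtain ⟨x, hx, ξ, rfl⟩ := mem_support.1 hζ
    obtain ⟨j, hx⟩ := mem_iUnion.1 hx
    rw [hAF j] at hx
    exact support_mono (subset_iUnion F j)
      (support_genCantorSubalgebra_subset (F j) (mem_support.2 ⟨x, hx, ξ, rfl⟩))
  obtain ⟨N₀, hN₀⟩ :=
    exists_cylinder_mem_of_append_mem_support hproj (finite_iUnion hF) hFS hSF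
  refine ⟨N₀, fun N hN ζ => ⟨fun h => ?_, fun h => ?_⟩⟩
  · rw [← Stream'.append_take_drop N ζ] at h
    exact hN₀ _ (by simpa using hN) _ h
  · exact mem_support.2 ⟨_, h, Stream'.drop N ζ, Stream'.append_take_drop N ζ⟩

lemma exists_cylinder_not_mem {S : Set Table} (h : genCantorSubalgebra tableStr S ≠ univ)
    (N : ℕ) : ∃ u : List Bool, u.length = N ∧ cylinder u ∉ S := by
  by_contra! hall
  have hgen := isCantorSubalgebra_genCantorSubalgebra (hX := tableStr) S
  exact h (eq_univ_of_cylinder_nil_mem hgen (cylinder_nil_mem_of_forall_length_eq hgen N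
    fun u hu => subset_genCantorSubalgebra S (hall u hu)))

section Transfer

variable {ι : Type} {A : ι → Set Table} {φ : ι → Table → Table}

lemma transfer_wellDefined (hA : ∀ j, IsCantorSubalgebra tableStr (A j))
    (hdisj : Pairwise (Disjoint on A)) (hφ : ∀ j, IsCantorHomOn tableStr tableStr (A j) (φ j))
    {i j : ι} {x x' : Table} (hx : x ∈ A i) (hx' : x' ∈ A j) {ξ ξ' : Stream' Bool}
    (h : x.1 ξ = x'.1 ξ') : (φ i x).1 ξ = (φ j x').1 ξ' := by
  obtain ⟨v, v', ψ, rfl, rfl, hvv'⟩ := x.2.exists_comp_cyl_eq x'.2 h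
  have hproj : tableStr.projWord v x = tableStr.projWord v' x' :=
    Subtype.ext (by rw [tableStr_projWord_val, tableStr_projWord_val, hvv'])
  have hmem_i := CantorStr.projWord_mem (fun _ hy => (hA i).proj_mem hy) hx v
  have hmem_j := CantorStr.projWord_mem (fun _ hy => (hA j).proj_mem hy) hx' v'
  obtain rfl : i = j := by
    by_contra hij
    exact disjoint_left.1 (hdisj hij) hmem_i (hproj ▸ hmem_j)
  calc (φ i x).1 (v ++ₛ ψ) = (tableStr.projWord v (φ i x)).1 ψ := by rw [tableStr_projWord_val]; rfl
    _ = (tableStr.projWord v' (φ i x')).1 ψ := by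
      rw [← (hφ i).map_projWord (hA i) hx, hproj, (hφ i).map_projWord (hA i) hx']
    _ = (φ i x').1 (v' ++ₛ ψ) := by rw [tableStr_projWord_val]; rfl

lemma exists_transfer (hA : ∀ j, IsCantorSubalgebra tableStr (A j))
    (hdisj : Pairwise (Disjoint on A)) (hφ : ∀ j, IsCantorHomOn tableStr tableStr (A j) (φ j)) :
    ∃ d : Stream' Bool → Stream' Bool, ∀ j, ∀ x ∈ A j, d ∘ x.1 = (φ j x).1 := by
  have : ∀ ζ, ∃ η, ∀ j, ∀ x ∈ A j, ∀ ξ, x.1 ξ = ζ → (φ j x).1 ξ = η := by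
    intro ζ
    by_cases h : ∃ i, ∃ y ∈ A i, ∃ ξ', y.1 ξ' = ζ
    · obtain ⟨i, y, hy, ξ', rfl⟩ := h
      exact ⟨_, fun j x hx ξ hξ => transfer_wellDefined hA hdisj hφ hx hy hξ⟩
    · push Not at h
      exact ⟨ζ, fun j x hx ξ hξ => absurd hξ (h j x hx ξ)⟩
  choose d hd using this
  exact ⟨d, fun j x hx => funext fun ξ => (hd _ j x hx ξ rfl).symm⟩

end Transfer

/-- `p` maps Cantor space bijectively onto the sequences whose depth-`N` prefix lies in `U`, with
inverse `q` there; `p` is a table map, and so is `q` on each of those cylinders. -/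
structure IsTableParam (N : ℕ) (U : Set (List Bool)) (p q : Stream' Bool → Stream' Bool) :
    Prop where
  take_mem : ∀ ζ, Stream'.take N (p ζ) ∈ U
  leftInverse : LeftInverse q p
  apply_apply : ∀ η, Stream'.take N η ∈ U → p (q η) = η
  isTable : IsTable p
  isTable_comp_cyl : ∀ u ∈ U, IsTable (q ∘ cyl u)

variable {N : ℕ} {u : List Bool}

lemma drop_comp_cyl (hu : u.length = N) : Stream'.drop N ∘ cyl u = cyl [] :=
  funext fun ζ => hu ▸ Stream'.drop_append_stream u ζ

lemma isTableParam_singleton (hu : u.length = N) :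
    IsTableParam N {u} (cyl u) (Stream'.drop N) where
  take_mem ζ := take_append_stream_of_length hu ζ
  leftInverse ζ := congrFun (drop_comp_cyl hu) ζ
  apply_apply η h := by
    rw [mem_singleton_iff] at h
    rw [cyl_apply, ← h, Stream'.append_take_drop]
  isTable := isTable_cyl u
  isTable_comp_cyl u' h := by
    rw [mem_singleton_iff.1 h, drop_comp_cyl hu]
    exact isTable_cyl []

lemma IsTableParam.insert {U : Set (List Bool)} {p q : Stream' Bool → Stream' Bool}
    (hpq : IsTableParam N U p q) (hU : ∀ u' ∈ U, u'.length = N) (hu : u.length = N)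
    (huU : u ∉ U) :
    IsTableParam N (insert u U) (join (cyl u) p)
      (fun η => if Stream'.take N η = u then [false] ++ₛ Stream'.drop N η else [true] ++ₛ q η) := by
  have hne : ∀ ζ, Stream'.take N (p ζ) ≠ u := fun ζ h => huU (h ▸ hpq.take_mem ζ)
  have hcases : ∀ ζ : Stream' Bool, ∃ b ξ, ζ = [b] ++ₛ ξ :=
    fun ζ => ⟨ζ.head, ζ.tail, (Stream'.append_stream_head_tail ζ).symm⟩
  refine ⟨fun ζ => ?_, fun ζ => ?_, fun η hη => ?_, (isTable_cyl u).join hpq.isTable,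
    fun u' hu' => ?_⟩
  · obtain ⟨b | b, ξ, rfl⟩ := hcases ζ
    · exact Or.inl (take_append_stream_of_length hu ξ)
    · exact Or.inr (hpq.take_mem ξ)
  · obtain ⟨b | b, ξ, rfl⟩ := hcases ζ
    · simp only [join_false_append, cyl_apply, take_append_stream_of_length hu, if_true]
      rw [← hu, Stream'.drop_append_stream]
    · simp only [join_true_append, hne ξ, if_false, hpq.leftInverse ξ]
  · by_cases h : Stream'.take N η = u
    · simp only [h, if_true, join_false_append, cyl_apply]
      rw [← h, Stream'.append_take_drop]
    · simp only [h, if_false, join_true_append]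
      exact hpq.apply_apply η ((mem_insert_iff.1 hη).resolve_left h)
  · rcases mem_insert_iff.1 hu' with rfl | hu'
    · have : (fun η => if Stream'.take N η = u' then [false] ++ₛ Stream'.drop N η
          else [true] ++ₛ q η) ∘ cyl u' = cyl [false] := by
        funext ξ
        simp only [comp_apply, cyl_apply, take_append_stream_of_length hu, if_true]
        rw [← hu, Stream'.drop_append_stream]
      rw [this]
      exact isTable_cyl _
    · have hne' : u' ≠ u := fun h => huU (h ▸ hu')
      have : (fun η => if Stream'.take N η = u then [false] ++ₛ Stream'.drop N η
          else [true] ++ₛ q η) ∘ cyl u' = cyl [true] ∘ (q ∘ cyl u') := by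
        funext ξ
        simp only [comp_apply, cyl_apply, take_append_stream_of_length (hU u' hu'), if_neg hne']
      rw [this]
      exact (isTable_cyl _).comp (hpq.isTable_comp_cyl u' hu')

lemma exists_isTableParam {U : Finset (List Bool)} (hU : U.Nonempty)
    (hlen : ∀ u ∈ U, u.length = N) : ∃ p q, IsTableParam N U p q := by
  induction hU using Finset.Nonempty.cons_induction with
  | singleton u => exact ⟨_, _, by simpa using isTableParam_singleton (hlen u (by simp))⟩
  | cons u U huU hU ih =>
    obtain ⟨p, q, hpq⟩ := ih fun u' hu' => hlen u' (Finset.mem_cons_of_mem hu')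
    have hU : ∀ u' ∈ (U : Set (List Bool)), u'.length = N :=
      fun u' hu' => hlen u' (Finset.mem_cons_of_mem hu')
    exact ⟨_, _, by simpa using hpq.insert hU (hlen u (Finset.mem_cons_self u U)) huU⟩

lemma exists_isTableParam_compl {S : Set Table} (hS : genCantorSubalgebra tableStr S ≠ univ)
    (N : ℕ) : ∃ p q, IsTableParam N {u | u.length = N ∧ cylinder u ∉ S} p q := by
  have hfin : {u : List Bool | u.length = N ∧ cylinder u ∉ S}.Finite :=
    (List.finite_length_eq Bool N).subset fun u hu => hu.1
  obtain ⟨u, hu⟩ := exists_cylinder_not_mem hS N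
  simpa using exists_isTableParam (U := hfin.toFinset) ⟨u, by simpa using hu⟩
    (by simp +contextual)

lemma piecewise_leftInverse {α : Type} {D E : Set α} [DecidablePred (· ∈ D)]
    [DecidablePred (· ∈ E)] {d e p q p' q' : α → α} (hd : ∀ x ∈ D, d x ∈ E ∧ e (d x) = x)
    (hp' : ∀ x, p' x ∉ E) (hq' : LeftInverse q' p') (hpq : ∀ x ∉ D, p (q x) = x) :
    LeftInverse (E.piecewise e (p ∘ q')) (D.piecewise d (p' ∘ q)) := by
  intro x
  by_cases hx : x ∈ D
  · rw [piecewise_eq_of_mem _ _ _ hx, piecewise_eq_of_mem _ _ _ (hd x hx).1, (hd x hx).2]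
  · rw [piecewise_eq_of_notMem _ _ _ hx, comp_apply, piecewise_eq_of_notMem _ _ _ (hp' _),
      comp_apply, hq', hpq x hx]

lemma transfer_mem_support {ι : Type} {A B : ι → Set Table} {φ ψ : ι → Table → Table}
    {d e : Stream' Bool → Stream' Bool} (hd : ∀ j, ∀ x ∈ A j, d ∘ x.1 = (φ j x).1)
    (he : ∀ j, ∀ y ∈ B j, e ∘ y.1 = (ψ j y).1) (hφ : ∀ j, MapsTo (φ j) (A j) (B j))
    (hψ : ∀ j, LeftInvOn (ψ j) (φ j) (A j)) :
    ∀ ζ ∈ support (⋃ j, A j), d ζ ∈ support (⋃ j, B j) ∧ e (d ζ) = ζ := by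
  intro ζ hζ
  obtain ⟨x, hx, ξ, rfl⟩ := mem_support.1 hζ
  obtain ⟨j, hj⟩ := mem_iUnion.1 hx
  have hdx : d (x.1 ξ) = (φ j x).1 ξ := congrFun (hd j x hj) ξ
  refine ⟨hdx ▸ mem_support.2 ⟨φ j x, mem_iUnion.2 ⟨j, hφ j hj⟩, ξ, rfl⟩, ?_⟩
  rw [hdx, ← comp_apply (f := e), he j _ (hφ j hj), hψ j hj]

lemma isTable_comp_of_transfer {ι : Type} {A : ι → Set Table} {φ : ι → Table → Table}
    {d : Stream' Bool → Stream' Bool} (hd : ∀ j, ∀ x ∈ A j, d ∘ x.1 = (φ j x).1) :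
    ∀ x ∈ ⋃ j, A j, IsTable (d ∘ x.1) := by
  intro x hx
  obtain ⟨j, hj⟩ := mem_iUnion.1 hx
  rw [hd j x hj]
  exact (φ j x).2

lemma exists_transfer_inverse {ι : Type} {A B : ι → Set Table} {φ : ι → Table → Table}
    (hA : ∀ j, IsCantorSubalgebra tableStr (A j)) (hB : ∀ j, IsCantorSubalgebra tableStr (B j))
    (hAd : Pairwise (Disjoint on A)) (hBd : Pairwise (Disjoint on B))
    (hbij : ∀ j, BijOn (φ j) (A j) (B j))
    (hφ : ∀ j, IsCantorHomOn tableStr tableStr (A j) (φ j)) :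
    ∃ d e : Stream' Bool → Stream' Bool, (∀ j, ∀ x ∈ A j, d ∘ x.1 = (φ j x).1) ∧
      (∀ x ∈ ⋃ j, A j, IsTable (d ∘ x.1)) ∧ (∀ y ∈ ⋃ j, B j, IsTable (e ∘ y.1)) ∧
      (∀ ζ ∈ support (⋃ j, A j), d ζ ∈ support (⋃ j, B j) ∧ e (d ζ) = ζ) ∧
      ∀ η ∈ support (⋃ j, B j), e η ∈ support (⋃ j, A j) ∧ d (e η) = η := by
  set ψ := fun j => invFunOn (φ j) (A j)
  have hψ : ∀ j, IsCantorHomOn tableStr tableStr (B j) (ψ j) :=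
    fun j => (hφ j).invFunOn (hA j) (hbij j)
  obtain ⟨d, hd⟩ := exists_transfer hA hAd hφ
  obtain ⟨e, he⟩ := exists_transfer hB hBd hψ
  exact ⟨d, e, hd, isTable_comp_of_transfer hd, isTable_comp_of_transfer he,
    transfer_mem_support hd he (fun j => (hbij j).mapsTo) (fun j => (hbij j).invOn_invFunOn.1),
    transfer_mem_support he hd (fun j => (hbij j).surjOn.mapsTo_invFunOn)
      (fun j => (hbij j).invOn_invFunOn.2)⟩

lemma isTable_piecewise_support {S : Set Table} {N : ℕ} [DecidablePred (· ∈ support S)]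
    {d g : Stream' Bool → Stream' Bool} (hd : ∀ x ∈ S, IsTable (d ∘ x.1))
    (hN : ∀ ζ, ζ ∈ support S ↔ cylinder (Stream'.take N ζ) ∈ S)
    (hg : ∀ u : List Bool, u.length = N → cylinder u ∉ S → IsTable (g ∘ cyl u)) :
    IsTable ((support S).piecewise d g) := by
  refine isTable_of_forall_comp_cyl N fun u hu => ?_
  have hN' : ∀ ξ, u ++ₛ ξ ∈ support S ↔ cylinder u ∈ S := fun ξ => by
    rw [hN, take_append_stream_of_length hu]
  by_cases hmem : cylinder u ∈ S
  · have : (support S).piecewise d g ∘ cyl u = d ∘ (cylinder u).1 :=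
      funext fun ξ => piecewise_eq_of_mem _ _ _ ((hN' ξ).2 hmem)
    rw [this]
    exact hd _ hmem
  · have : (support S).piecewise d g ∘ cyl u = g ∘ cyl u :=
      funext fun ξ => piecewise_eq_of_notMem _ _ _ (mt (hN' ξ).1 hmem)
    rw [this]
    exact hg u hu hmem

lemma exists_perm_of_transfer {SA SB : Set Table} {d e : Stream' Bool → Stream' Bool}
    (hNA : ∃ N₀, ∀ N, N₀ ≤ N → ∀ ζ, ζ ∈ support SA ↔ cylinder (Stream'.take N ζ) ∈ SA)
    (hNB : ∃ N₀, ∀ N, N₀ ≤ N → ∀ ζ, ζ ∈ support SB ↔ cylinder (Stream'.take N ζ) ∈ SB)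
    (hAp : genCantorSubalgebra tableStr SA ≠ univ) (hBp : genCantorSubalgebra tableStr SB ≠ univ)
    (hd : ∀ x ∈ SA, IsTable (d ∘ x.1)) (he : ∀ y ∈ SB, IsTable (e ∘ y.1))
    (hde : ∀ ζ ∈ support SA, d ζ ∈ support SB ∧ e (d ζ) = ζ)
    (hed : ∀ η ∈ support SB, e η ∈ support SA ∧ d (e η) = η) :
    ∃ σ : Equiv.Perm (Stream' Bool), IsTable σ ∧ IsTable σ.symm ∧ EqOn σ d (support SA) := by
  classical
  obtain ⟨NA, hNA⟩ := hNA
  obtain ⟨NB, hNB⟩ := hNB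
  set N := max NA NB
  have hA := hNA N (le_max_left NA NB)
  have hB := hNB N (le_max_right NA NB)
  obtain ⟨pA, qA, hpqA⟩ := exists_isTableParam_compl hAp N
  obtain ⟨pB, qB, hpqB⟩ := exists_isTableParam_compl hBp N
  have hcA : ∀ ζ, ζ ∉ support SA ↔ Stream'.take N ζ ∈ {u | u.length = N ∧ cylinder u ∉ SA} :=
    fun ζ => by simp [hA ζ]
  have hcB : ∀ ζ, ζ ∉ support SB ↔ Stream'.take N ζ ∈ {u | u.length = N ∧ cylinder u ∉ SB} :=
    fun ζ => by simp [hB ζ]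
  let σ : Equiv.Perm (Stream' Bool) :=
    { toFun := (support SA).piecewise d (pB ∘ qA)
      invFun := (support SB).piecewise e (pA ∘ qB)
      left_inv := piecewise_leftInverse hde (fun x => (hcB _).2 (hpqB.take_mem x))
        hpqB.leftInverse fun x hx => hpqA.apply_apply x ((hcA x).1 hx)
      right_inv := piecewise_leftInverse hed (fun x => (hcA _).2 (hpqA.take_mem x))
        hpqA.leftInverse fun x hx => hpqB.apply_apply x ((hcB x).1 hx) }
  refine ⟨σ, isTable_piecewise_support hd hA fun u hu hu' => ?_,
    isTable_piecewise_support he hB fun u hu hu' => ?_, fun ζ hζ => piecewise_eq_of_mem _ _ _ hζ⟩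
  · exact hpqB.isTable.comp (hpqA.isTable_comp_cyl u ⟨hu, hu'⟩)
  · exact hpqA.isTable.comp (hpqB.isTable_comp_cyl u ⟨hu, hu'⟩)

theorem exists_perm_extending {ι : Type} [Finite ι] {A B : ι → Set Table}
    {φ : ι → Table → Table} (hA : ∀ j, IsFGCantorSubalgebra tableStr (A j))
    (hB : ∀ j, IsFGCantorSubalgebra tableStr (B j)) (hAd : Pairwise (Disjoint on A))
    (hBd : Pairwise (Disjoint on B)) (hAp : genCantorSubalgebra tableStr (⋃ j, A j) ≠ univ)
    (hBp : genCantorSubalgebra tableStr (⋃ j, B j) ≠ univ) (hbij : ∀ j, BijOn (φ j) (A j) (B j))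
    (hφ : ∀ j, IsCantorHomOn tableStr tableStr (A j) (φ j)) :
    ∃ σ : Equiv.Perm (Stream' Bool), IsTable σ ∧ IsTable σ.symm ∧
      ∀ j, ∀ x ∈ A j, σ ∘ x.1 = (φ j x).1 := by
  obtain ⟨d, e, hdφ, hd, he, hde, hed⟩ := exists_transfer_inverse
    (fun j => (hA j).isCantorSubalgebra) (fun j => (hB j).isCantorSubalgebra) hAd hBd hbij hφ
  obtain ⟨σ, hσ, hσ', hσd⟩ := exists_perm_of_transfer (exists_depth_mem_support_iff hA)
    (exists_depth_mem_support_iff hB) hAp hBp hd he hde hed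
  refine ⟨σ, hσ, hσ', fun j x hx => ?_⟩
  rw [← hdφ j x hx]
  exact funext fun ξ => hσd (mem_support.2 ⟨x, mem_iUnion.2 ⟨j, hx⟩, ξ, rfl⟩)

def compPerm (σ : Equiv.Perm (Stream' Bool)) (hσ : IsTable σ) (hσ' : IsTable σ.symm) :
    Equiv.Perm Table where
  toFun x := ⟨σ ∘ x.1, hσ.comp x.2⟩
  invFun x := ⟨σ.symm ∘ x.1, hσ'.comp x.2⟩
  left_inv _ := Subtype.ext (funext fun _ => σ.symm_apply_apply _)
  right_inv _ := Subtype.ext (funext fun _ => σ.apply_symm_apply _)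

lemma isCantorHom_compPerm (σ : Equiv.Perm (Stream' Bool)) (hσ : IsTable σ)
    (hσ' : IsTable σ.symm) : IsCantorHom tableStr tableStr (compPerm σ hσ hσ') :=
  fun _ _ => Subtype.ext (comp_join σ)

theorem partialIsosExtend_tableStr : PartialIsosExtend tableStr := by
  intro ι _ A B φ hA hB hAd hBd hAp hBp hbij hφ
  obtain ⟨σ, hσ, hσ', hσφ⟩ := exists_perm_extending hA hB hAd hBd hAp hBp hbij hφ
  exact ⟨compPerm σ hσ hσ', isCantorHom_compPerm σ hσ hσ', fun j x hx => Subtype.ext (hσφ j x hx)⟩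

end CantorTable

/-- **Extension of isomorphisms on disjoint clones to a global automorphism**: given
pairwise disjoint clones `X j` (resp. `Y j`) whose unions generate proper subalgebras,
and Cantor algebra isomorphisms `φ j : X j → Y j`, there is an automorphism
`v ∈ Aut(C)` with `v x = φ j x` for all `j` and `x ∈ X j`. -/
theorem extend_clone_isos {C : Type} (hC : CantorStr C) (c : C)
    (hfree : IsFreeCantorOn hC ![c]) (k : ℕ) (X Y : Fin k → Set C)
    (hX : ∀ j, IsClone hC (X j)) (hY : ∀ j, IsClone hC (Y j))
    (hXd : ∀ i j, i ≠ j → X i ∩ X j = ∅) (hYd : ∀ i j, i ≠ j → Y i ∩ Y j = ∅)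
    (hXp : genCantorSubalgebra hC (⋃ j, X j) ≠ Set.univ)
    (hYp : genCantorSubalgebra hC (⋃ j, Y j) ≠ Set.univ)
    (φ : Fin k → C → C) (hbij : ∀ j, Set.BijOn (φ j) (X j) (Y j))
    (hhom : ∀ j, ∀ x ∈ X j, ∀ y ∈ X j, φ j (hC.mu (x, y)) = hC.mu (φ j x, φ j y)) :
    ∃ v : ↥(cantorAut hC), ∀ j, ∀ x ∈ X j, (v : Equiv.Perm C) x = φ j x := by
  obtain ⟨e, he⟩ := CantorTable.exists_equiv_table hfree
  obtain ⟨v, hv, hvφ⟩ := CantorTable.partialIsosExtend_tableStr.of_equiv e he (Fin k) X Y φ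
    (fun j => (hX j).2.2.2) (fun j => (hY j).2.2.2)
    (fun i j hij => disjoint_iff_inter_eq_empty.2 (hXd i j hij))
    (fun i j hij => disjoint_iff_inter_eq_empty.2 (hYd i j hij)) hXp hYp hbij hhom
  exact ⟨⟨v, hv⟩, hvφ⟩
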